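/- The minimal-norm collocation solution u_{∥N} satisfies R u_{∥N} = P_{V_N} f, where P_{V_N} is the orthogonal projection in the RKHS (Im R, ⟨·,·⟩_{Im R}) onto the finite-dimensional subspace V_N = span{Q(·,θ_k) e_i : i = 1,…,n, k = 1,…,N}. -/

import Mathlib

open MeasureTheory Matrix Set NormedSpace Filter
open scoped RealInnerProductSpace
noncomputable section

/-- Lebesgue measure restricted to `[0,T]`. -/
def muT (T : ℝ) : Measure ℝ := MeasureTheory.volume.restrict (Set.Icc (0:ℝ) T)

/-- The space `L²([0,T], ℝᵐ)`. -/
abbrev L2 (m : ℕ) (T : ℝ) := MeasureTheory.Lp (EuclideanSpace ℝ (Fin m)) 2 (muT T)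

/-- Single-parameter reachability map `u ↦ ∫₀ᵀ e^{A(T-s)} B u(s) ds`. -/
def RopK {n m : ℕ} (T : ℝ) (A : Matrix (Fin n) (Fin n) ℝ) (B : Matrix (Fin n) (Fin m) ℝ)
    (u : L2 m T) : EuclideanSpace ℝ (Fin n) :=
  ∫ s in Set.Icc (0:ℝ) T, WithLp.toLp 2 (((exp ((T - s) • A)) * B).mulVec (u s))

/-- The adjoint kernel `s ↦ Bᵀ e^{Aᵀ(T-s)} v`. -/
def RadjK {n m : ℕ} (T : ℝ) (A : Matrix (Fin n) (Fin n) ℝ) (B : Matrix (Fin n) (Fin m) ℝ)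
    (v : EuclideanSpace ℝ (Fin n)) (s : ℝ) : EuclideanSpace ℝ (Fin m) :=
  WithLp.toLp 2 ((Bᵀ * exp ((T - s) • Aᵀ)).mulVec v)

/-- Parametrized reachability operator `(Ru)(θ)`. -/
def RopFam {n m : ℕ} (T : ℝ) (A : ℝ → Matrix (Fin n) (Fin n) ℝ)
    (B : ℝ → Matrix (Fin n) (Fin m) ℝ) (u : L2 m T) (θ : ℝ) : EuclideanSpace ℝ (Fin n) :=
  RopK T (A θ) (B θ) u

/-- The reproducing kernel `Q(θ, θ')`. -/
def Qfun {n m : ℕ} (T : ℝ) (A : ℝ → Matrix (Fin n) (Fin n) ℝ)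
    (B : ℝ → Matrix (Fin n) (Fin m) ℝ) (θ θ' : ℝ) : Matrix (Fin n) (Fin n) ℝ :=
  Matrix.of fun i j => ∫ s in Set.Icc (0:ℝ) T,
    (exp ((T - s) • A θ) * B θ * (B θ')ᵀ * exp ((T - s) • (A θ')ᵀ)) i j

/-- Controllability Gramian of `(A,B)` on `[0,T]`. -/
def Gram {n m : ℕ} (T : ℝ) (A : Matrix (Fin n) (Fin n) ℝ) (B : Matrix (Fin n) (Fin m) ℝ) :
    Matrix (Fin n) (Fin n) ℝ :=
  Matrix.of fun i j => ∫ s in Set.Icc (0:ℝ) T,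
    ((exp ((T - s) • A)) * B * Bᵀ * (exp ((T - s) • Aᵀ))) i j

/-!
Evaluating `R u` at `θ` in the direction `eᵢ` is the `L²` inner product of `u` with the kernel
`s ↦ B(θ)ᵀ e^{A(θ)ᵀ(T-s)} eᵢ`, and `R` applied to that kernel is `Q(·,θ) eᵢ`. Hence the
interpolation constraints say exactly that `u − uf` is orthogonal to `U_N = span{u_{i,k}}`, which
is the orthogonality claim. A minimal-norm element of an affine set `x + U_Nᗮ` lies in `U_N`
(Pythagoras against its projection onto `U_N`), so `u_{∥N} = ∑ c_{k,i} u_{i,k}` and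
`R u_{∥N} = ∑ c_{k,i} Q(·,θ_k) eᵢ`.
-/

theorem Submodule.mem_of_norm_le_of_sub_mem_orthogonal {E : Type*} [NormedAddCommGroup E]
    [InnerProductSpace ℝ E] (K : Submodule ℝ E) [K.HasOrthogonalProjection] {x : E}
    (hx : ∀ w, w - x ∈ Kᗮ → ‖x‖ ≤ ‖w‖) : x ∈ K := by
  have hle : ‖x‖ ≤ ‖K.starProjection x‖ := hx _ <| by
    simpa [neg_sub] using Kᗮ.neg_mem (K.sub_starProjection_mem_orthogonal x)
  have hpyth := K.norm_sq_eq_add_norm_sq_starProjection x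
  have hzero : Kᗮ.starProjection x = 0 := by
    rw [← norm_eq_zero]
    nlinarith [norm_nonneg (Kᗮ.starProjection x), norm_nonneg x]
  rwa [Submodule.starProjection_apply_eq_zero_iff, Submodule.orthogonal_orthogonal] at hzero

instance (T : ℝ) : IsFiniteMeasure (muT T) := by unfold muT; infer_instance

section MulVecCLM

variable {ι κ : Type*} [Fintype ι] [Fintype κ] [DecidableEq κ]

def Matrix.mulVecCLM : Matrix ι κ ℝ ≃ₗ[ℝ] (EuclideanSpace ℝ κ →L[ℝ] EuclideanSpace ℝ ι) :=
  Matrix.toEuclideanLin.trans LinearMap.toContinuousLinearMap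

theorem Matrix.mulVecCLM_apply (M : Matrix ι κ ℝ) (x : EuclideanSpace ℝ κ) :
    M.mulVecCLM x = WithLp.toLp 2 (M *ᵥ x) := rfl

theorem Continuous.mulVecCLM {K : ℝ → Matrix ι κ ℝ} (hK : Continuous K) :
    Continuous fun s => (K s).mulVecCLM :=
  (LinearMap.continuous_of_finiteDimensional
    (Matrix.mulVecCLM : Matrix ι κ ℝ ≃ₗ[ℝ] _).toLinearMap).comp hK

theorem Integrable.mulVecCLM_apply {μ : Measure ℝ} {a b : ℝ} {K : ℝ → Matrix ι κ ℝ}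
    (hK : Continuous K) {u : ℝ → EuclideanSpace ℝ κ} (hu : Integrable u (μ.restrict (Icc a b))) :
    Integrable (fun s => (K s).mulVecCLM (u s)) (μ.restrict (Icc a b)) := by
  obtain ⟨C, hC⟩ : ∃ C, ∀ s ∈ Icc a b, ‖(K s).mulVecCLM‖ ≤ C :=
    isCompact_Icc.exists_bound_of_continuousOn hK.mulVecCLM.continuousOn
  refine (hu.norm.const_mul C).mono' ?_ ?_
  · exact isBoundedBilinearMap_apply.continuous.comp_aestronglyMeasurable
      (hK.mulVecCLM.aestronglyMeasurable.prodMk hu.1)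
  · filter_upwards [ae_restrict_mem measurableSet_Icc] with s hs
    exact ((K s).mulVecCLM.le_opNorm (u s)).trans
      (mul_le_mul_of_nonneg_right (hC s hs) (norm_nonneg _))

end MulVecCLM

section

attribute [local instance] Matrix.linftyOpNormedRing Matrix.linftyOpNormedAlgebra

theorem continuous_exp_smul_mul {n m : ℕ} (T : ℝ) (A : Matrix (Fin n) (Fin n) ℝ)
    (B : Matrix (Fin n) (Fin m) ℝ) : Continuous fun s : ℝ => exp ((T - s) • A) * B :=
  (NormedSpace.exp_continuous.comp ((continuous_const.sub continuous_id).smul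
    continuous_const)).matrix_mul continuous_const

end

section Reachability

variable {n m : ℕ} {T : ℝ}

theorem RopK_eq_integral (A : Matrix (Fin n) (Fin n) ℝ) (B : Matrix (Fin n) (Fin m) ℝ)
    (u : L2 m T) : RopK T A B u = ∫ s, (exp ((T - s) • A) * B).mulVecCLM (u s) ∂(muT T) := rfl

theorem integrable_RopK_integrand (A : Matrix (Fin n) (Fin n) ℝ) (B : Matrix (Fin n) (Fin m) ℝ)
    (u : L2 m T) : Integrable (fun s => (exp ((T - s) • A) * B).mulVecCLM (u s)) (muT T) :=
  Integrable.mulVecCLM_apply (μ := volume) (continuous_exp_smul_mul T A B)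
    ((Lp.memLp u).integrable one_le_two)

variable (T) in
def RopKₗ (A : Matrix (Fin n) (Fin n) ℝ) (B : Matrix (Fin n) (Fin m) ℝ) :
    L2 m T →ₗ[ℝ] EuclideanSpace ℝ (Fin n) where
  toFun := RopK T A B
  map_add' u v := by
    rw [RopK_eq_integral, RopK_eq_integral, RopK_eq_integral,
      ← integral_add (integrable_RopK_integrand A B u) (integrable_RopK_integrand A B v)]
    refine integral_congr_ae ?_
    filter_upwards [Lp.coeFn_add u v] with s hs
    rw [hs]
    simp
  map_smul' c u := by
    rw [RingHom.id_apply, RopK_eq_integral, RopK_eq_integral, ← integral_smul]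
    refine integral_congr_ae ?_
    filter_upwards [Lp.coeFn_smul c u] with s hs
    rw [hs]
    simp

theorem RopKₗ_apply (A : Matrix (Fin n) (Fin n) ℝ) (B : Matrix (Fin n) (Fin m) ℝ) (u : L2 m T) :
    RopKₗ T A B u = RopK T A B u := rfl

theorem RopFam_sub (A : ℝ → Matrix (Fin n) (Fin n) ℝ) (B : ℝ → Matrix (Fin n) (Fin m) ℝ)
    (u v : L2 m T) (θ : ℝ) : RopFam T A B (u - v) θ = RopFam T A B u θ - RopFam T A B v θ :=
  map_sub (RopKₗ T (A θ) (B θ)) u v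

theorem RopK_apply_eq_integral (A : Matrix (Fin n) (Fin n) ℝ) (B : Matrix (Fin n) (Fin m) ℝ)
    (u : L2 m T) (i : Fin n) :
    RopK T A B u i = ∫ s, (exp ((T - s) • A) * B).mulVecCLM (u s) i ∂(muT T) :=
  ((EuclideanSpace.proj i).integral_comp_comm (integrable_RopK_integrand A B u)).symm

theorem inner_RadjK_single (A : Matrix (Fin n) (Fin n) ℝ) (B : Matrix (Fin n) (Fin m) ℝ)
    (x : EuclideanSpace ℝ (Fin m)) (i : Fin n) (s : ℝ) :
    ⟪x, RadjK T A B (EuclideanSpace.single i 1) s⟫ = (exp ((T - s) • A) * B).mulVecCLM x i := by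
  have hM : Bᵀ * exp ((T - s) • Aᵀ) = (exp ((T - s) • A) * B)ᵀ := by
    rw [transpose_mul, ← exp_transpose, transpose_smul]
  rw [RadjK, hM, EuclideanSpace.inner_eq_star_dotProduct, star_trivial, dotProduct_comm,
    dotProduct_mulVec, vecMul_transpose, Matrix.mulVecCLM_apply]
  exact dotProduct_single _ _ _ |>.trans (mul_one _)

theorem inner_eq_RopK_apply {A : Matrix (Fin n) (Fin n) ℝ} {B : Matrix (Fin n) (Fin m) ℝ}
    {w : L2 m T} {i : Fin n} (hw : ∀ᵐ s ∂(muT T), w s = RadjK T A B (EuclideanSpace.single i 1) s)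
    (u : L2 m T) : ⟪u, w⟫ = RopK T A B u i := by
  rw [L2.inner_def, RopK_apply_eq_integral]
  refine integral_congr_ae ?_
  filter_upwards [hw] with s hs
  rw [hs, inner_RadjK_single]

theorem RopFam_eq_Qfun_mulVec_single {A : ℝ → Matrix (Fin n) (Fin n) ℝ}
    {B : ℝ → Matrix (Fin n) (Fin m) ℝ} {θ' : ℝ} {w : L2 m T} {i : Fin n}
    (hw : ∀ᵐ s ∂(muT T), w s = RadjK T (A θ') (B θ') (EuclideanSpace.single i 1) s) (θ : ℝ) :
    RopFam T A B w θ = (Qfun T A B θ θ') *ᵥ EuclideanSpace.single i 1 := by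
  funext j
  rw [RopFam, RopK_apply_eq_integral]
  show _ = (Qfun T A B θ θ' *ᵥ Pi.single i 1) j
  rw [mulVec_single_one]
  refine integral_congr_ae ?_
  filter_upwards [hw] with s hs
  rw [hs, Matrix.mulVecCLM_apply, RadjK]
  show ((exp ((T - s) • A θ) * B θ) *ᵥ (((B θ')ᵀ * exp ((T - s) • (A θ')ᵀ)) *ᵥ Pi.single i 1)) j = _
  rw [mulVec_mulVec, mulVec_single_one, col_apply, ← Matrix.mul_assoc]

end Reachability

theorem collocation_solution_is_projection_general {n m N : ℕ} (T θm θp : ℝ)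
    (A : ℝ → Matrix (Fin n) (Fin n) ℝ) (B : ℝ → Matrix (Fin n) (Fin m) ℝ)
    (θs : Fin N → ℝ) (uf : L2 m T) (upar : L2 m T)
    (hupar : ∀ k, RopFam T A B upar (θs k) = RopFam T A B uf (θs k))
    (huparmin : ∀ w : L2 m T,
      (∀ k, RopFam T A B w (θs k) = RopFam T A B uf (θs k)) → ‖upar‖ ≤ ‖w‖)
    (uik : Fin N → Fin n → L2 m T)
    (huik : ∀ k i, ∀ᵐ s ∂(muT T),
      uik k i s = RadjK T (A (θs k)) (B (θs k)) (EuclideanSpace.single i 1) s) :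
    (∃ c : Fin N × Fin n → ℝ, ∀ θ ∈ Set.Icc θm θp,
        RopFam T A B upar θ =
          ∑ p : Fin N × Fin n, c p • (Qfun T A B θ (θs p.1)).mulVec (EuclideanSpace.single p.2 1)) ∧
      ∀ k i, ⟪upar - uf, uik k i⟫ = 0 := by
  set U := Submodule.span ℝ (Set.range fun p : Fin N × Fin n => uik p.1 p.2)
  have hconstraint : ∀ w, w - upar ∈ Uᗮ →
      ∀ k, RopFam T A B w (θs k) = RopFam T A B uf (θs k) := by
    intro w hw k
    rw [← hupar k, ← sub_eq_zero, ← RopFam_sub]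
    ext i
    rw [RopFam, ← inner_eq_RopK_apply (huik k i)]
    exact U.inner_left_of_mem_orthogonal (Submodule.subset_span (Set.mem_range_self (k, i))) hw
  have : FiniteDimensional ℝ U := FiniteDimensional.span_of_finite ℝ (Set.finite_range _)
  have hmem : upar ∈ U :=
    U.mem_of_norm_le_of_sub_mem_orthogonal fun w hw => huparmin w (hconstraint w hw)
  obtain ⟨c, rfl⟩ := (Submodule.mem_span_range_iff_exists_fun ℝ).mp hmem
  refine ⟨⟨c, fun θ _ => ?_⟩, fun k i => ?_⟩
  · rw [RopFam, ← RopKₗ_apply, map_sum, WithLp.ofLp_sum]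
    refine Finset.sum_congr rfl fun p _ => ?_
    rw [_root_.map_smul, WithLp.ofLp_smul, RopKₗ_apply, ← RopFam,
      RopFam_eq_Qfun_mulVec_single (huik p.1 p.2)]
  · rw [inner_eq_RopK_apply (huik k i), ← RopFam, RopFam_sub, hupar k, sub_self]
    rfl

/-- the minimal-norm collocation solution `u_{∥N}` satisfies
`R u_{∥N} = P_{V_N} f`: (a) `R u_{∥N}` lies in `V_N = span{Q(·,θ_k)eᵢ}` and
(b) `R u_{∥N} − f` is `Im R`-orthogonal to `V_N`, i.e. (via the isometry `R♯`)
`u_{∥N} − R♯f` is `L²`-orthogonal to each `u_{i,k} = R♯(Q(·,θ_k)eᵢ)`. -/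
theorem collocation_solution_is_projection {n m N : ℕ} (T θm θp : ℝ) (hT : 0 < T)
    (hθ : θm ≤ θp)
    (A : ℝ → Matrix (Fin n) (Fin n) ℝ) (B : ℝ → Matrix (Fin n) (Fin m) ℝ)
    (hA : ∀ i j, Continuous fun θ => A θ i j) (hB : ∀ i j, Continuous fun θ => B θ i j)
    (θs : Fin N → ℝ) (hθs : StrictMono θs) (hθsP : ∀ k, θs k ∈ Set.Icc θm θp)
    (uf : L2 m T)
    (hufmin : ∀ w : L2 m T,
      (∀ θ ∈ Set.Icc θm θp, RopFam T A B w θ = RopFam T A B uf θ) → ‖uf‖ ≤ ‖w‖)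
    (upar : L2 m T)
    (hupar : ∀ k, RopFam T A B upar (θs k) = RopFam T A B uf (θs k))
    (huparmin : ∀ w : L2 m T,
      (∀ k, RopFam T A B w (θs k) = RopFam T A B uf (θs k)) → ‖upar‖ ≤ ‖w‖)
    (uik : Fin N → Fin n → L2 m T)
    (huik : ∀ k i, ∀ᵐ s ∂(muT T),
      uik k i s = RadjK T (A (θs k)) (B (θs k)) (EuclideanSpace.single i 1) s) :
    (∃ c : Fin N × Fin n → ℝ, ∀ θ ∈ Set.Icc θm θp,
        RopFam T A B upar θ =
          ∑ p : Fin N × Fin n, c p • (Qfun T A B θ (θs p.1)).mulVec (EuclideanSpace.single p.2 1)) ∧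
      ∀ k i, ⟪upar - uf, uik k i⟫ = 0 :=
  collocation_solution_is_projection_general T θm θp A B θs uf upar hupar huparmin uik huik
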